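/- arXiv:2510.07088 — 4 statements merged into one kernel-verified Lean document; each statement's English description precedes it below -/
import Mathlib

section
/- Let X = (X_1,...,X_d) be a random vector taking values in {0,1}^d with full support (every configuration has positive probability). For each subset A of {1,...,d} define e_A(X_A) := (-1)^(∑_{j∈A} X_j) / P(X_A = x_A) evaluated at X_A. Then the family (e_A)_{A ⊆ D} is hierarchically orthogonal: for any subsets B ⊊ A, E[e_A(X_A) e_B(X_B)] = 0. -/
open Finset

noncomputable section

/-- Marginal probability `P(X_A = x_A)` for a mass function `p` on `{0,1}^d`. -/
def margProb {d : ℕ} (p : (Fin d → Bool) → ℝ) (A : Finset (Fin d)) (x : Fin d → Bool) : ℝ :=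
  ∑ y ∈ univ.filter (fun y : Fin d → Bool => ∀ i ∈ A, y i = x i), p y

/-- The family `e_A(x_A) = (-1)^(∑_{j∈A} x_j) / P(X_A = x_A)`. -/
def eFun {d : ℕ} (p : (Fin d → Bool) → ℝ) (A : Finset (Fin d)) (x : Fin d → Bool) : ℝ :=
  (-1 : ℝ) ^ (∑ j ∈ A, if x j then (1 : ℕ) else 0) / margProb p A x

/-- Expectation of `f(X)` under the mass function `p`. -/
def expec {d : ℕ} (p : (Fin d → Bool) → ℝ) (f : (Fin d → Bool) → ℝ) : ℝ :=
  ∑ x, p x * f x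

lemma margProb_congr {d : ℕ} (p : (Fin d → Bool) → ℝ) (A : Finset (Fin d))
    {x y : Fin d → Bool} (h : ∀ i ∈ A, x i = y i) : margProb p A x = margProb p A y := by
  unfold margProb
  congr 1
  apply filter_congr
  intro t _
  constructor
  · intro ht i hi; rw [ht i hi, h i hi]
  · intro ht i hi; rw [ht i hi, h i hi]

lemma margProb_pos {d : ℕ} {p : (Fin d → Bool) → ℝ} (hpos : ∀ x, 0 < p x)
    (A : Finset (Fin d)) (x : Fin d → Bool) : 0 < margProb p A x := by
  apply sum_pos (fun y _ => hpos y)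
  exact ⟨x, by simp⟩

lemma eFun_congr {d : ℕ} (p : (Fin d → Bool) → ℝ) (A : Finset (Fin d))
    {x y : Fin d → Bool} (h : ∀ i ∈ A, x i = y i) : eFun p A x = eFun p A y := by
  unfold eFun
  rw [margProb_congr p A h]
  have hs : (∑ j ∈ A, if x j then (1 : ℕ) else 0) = ∑ j ∈ A, if y j then (1 : ℕ) else 0 :=
    sum_congr rfl fun j hj => by rw [h j hj]
  rw [hs]

/-- Evaluation of the fiber sum over `{x : x|_A = z}` when `z` vanishes off `A`. -/
lemma fiberSum_eval {d : ℕ} {p : (Fin d → Bool) → ℝ} (hpos : ∀ x, 0 < p x)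
    (A B : Finset (Fin d)) (hBA : B ⊆ A) (z : Fin d → Bool) (hz : ∀ j, j ∉ A → z j = false) :
    ∑ x ∈ univ.filter (fun x : Fin d → Bool => (fun j => if j ∈ A then x j else false) = z),
        p x * (eFun p A x * eFun p B x)
      = (-1 : ℝ) ^ (∑ j ∈ A, if z j then (1 : ℕ) else 0) * eFun p B z := by
  have hfib : ∀ x : Fin d → Bool,
      ((fun j => if j ∈ A then x j else false) = z) ↔ ∀ j ∈ A, x j = z j := by
    intro x
    constructor
    · intro hx j hj
      have := congrFun hx j
      rwa [if_pos hj] at this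
    · intro hx
      funext j
      by_cases hj : j ∈ A
      · rw [if_pos hj, hx j hj]
      · rw [if_neg hj, hz j hj]
  rw [filter_congr (fun x _ => hfib x)]
  have h1 : ∑ x ∈ univ.filter (fun x : Fin d → Bool => ∀ j ∈ A, x j = z j),
      p x * (eFun p A x * eFun p B x)
      = ∑ x ∈ univ.filter (fun x : Fin d → Bool => ∀ j ∈ A, x j = z j),
      p x * (eFun p A z * eFun p B z) := by
    apply sum_congr rfl
    intro x hx
    simp only [mem_filter] at hx
    rw [eFun_congr p A hx.2, eFun_congr p B (fun j hj => hx.2 j (hBA hj))]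
  rw [h1, ← sum_mul]
  have h2 : (∑ x ∈ univ.filter (fun x : Fin d → Bool => ∀ j ∈ A, x j = z j), p x)
      = margProb p A z := rfl
  rw [h2]
  have hne : margProb p A z ≠ 0 := (margProb_pos hpos A z).ne'
  have h3 : margProb p A z * (eFun p A z * eFun p B z)
      = (margProb p A z * eFun p A z) * eFun p B z := by ring
  rw [h3]
  congr 1
  unfold eFun
  field_simp

/-- Hierarchical orthogonality of the family `(e_A)` for a full-support
multivariate Bernoulli vector: if `B ⊊ A` then `E[e_A(X_A) e_B(X_B)] = 0`. -/
theorem eFun_hierarchically_orthogonal {d : ℕ}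
    (p : (Fin d → Bool) → ℝ) (hpos : ∀ x, 0 < p x) (hsum : ∑ x, p x = 1)
    (A B : Finset (Fin d)) (hBA : B ⊂ A) :
    expec p (fun x => eFun p A x * eFun p B x) = 0 := by
  classical
  obtain ⟨i, hiA, hiB⟩ := Finset.exists_of_ssubset hBA
  have regroup : expec p (fun x => eFun p A x * eFun p B x)
      = ∑ z : Fin d → Bool,
          ∑ x ∈ univ.filter (fun x : Fin d → Bool => (fun j => if j ∈ A then x j else false) = z),
            p x * (eFun p A x * eFun p B x) :=
    (Finset.sum_fiberwise_of_maps_to (fun x _ => mem_univ _) _).symm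
  rw [regroup]
  have key : ∀ z : Fin d → Bool,
      (∑ x ∈ univ.filter (fun x : Fin d → Bool => (fun j => if j ∈ A then x j else false) = z),
        p x * (eFun p A x * eFun p B x))
      + (∑ x ∈ univ.filter (fun x : Fin d → Bool =>
            (fun j => if j ∈ A then x j else false) = Function.update z i (!z i)),
        p x * (eFun p A x * eFun p B x)) = 0 := by
    intro z
    by_cases hz : ∀ j, j ∉ A → z j = false
    · have hz' : ∀ j, j ∉ A → Function.update z i (!z i) j = false := by
        intro j hj
        have hji : j ≠ i := fun h => hj (h ▸ hiA)
        rw [Function.update_of_ne hji]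
        exact hz j hj
      rw [fiberSum_eval hpos A B hBA.subset z hz,
          fiberSum_eval hpos A B hBA.subset _ hz']
      have hB : eFun p B (Function.update z i (!z i)) = eFun p B z := by
        apply eFun_congr
        intro j hj
        exact Function.update_of_ne (fun h : j = i => hiB (h ▸ hj)) _ _
      have hsign : (∑ j ∈ A, if Function.update z i (!z i) j then (1 : ℕ) else 0)
          = (if !z i then (1:ℕ) else 0) + ∑ j ∈ A.erase i, if z j then (1:ℕ) else 0 := by
        rw [← Finset.add_sum_erase A _ hiA]
        congr 1
        · rw [Function.update_self]
        · apply sum_congr rfl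
          intro j hj
          rw [Function.update_of_ne (Finset.ne_of_mem_erase hj)]
      have hsign0 : (∑ j ∈ A, if z j then (1 : ℕ) else 0)
          = (if z i then (1:ℕ) else 0) + ∑ j ∈ A.erase i, if z j then (1:ℕ) else 0 :=
        (Finset.add_sum_erase A _ hiA).symm
      rw [hB, hsign, hsign0, pow_add, pow_add]
      have hflip : ((-1 : ℝ) ^ if !z i then (1:ℕ) else 0)
          = -((-1 : ℝ) ^ if z i then (1:ℕ) else 0) := by
        cases z i <;> simp
      rw [hflip]
      ring
    · push_neg at hz
      obtain ⟨j, hjA, hjz⟩ := hz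
      have hji : j ≠ i := fun h => hjA (h ▸ hiA)
      have hempty : ∀ w : Fin d → Bool, w j = z j →
          (univ.filter (fun x : Fin d → Bool => (fun k => if k ∈ A then x k else false) = w))
            = ∅ := by
        intro w hw
        apply filter_false_of_mem
        intro x _ hx
        have := congrFun hx j
        rw [if_neg hjA] at this
        rw [← this] at hw
        exact hjz hw.symm
      rw [hempty z rfl, hempty _ (Function.update_of_ne hji _ _), sum_empty, add_zero]
  refine Finset.sum_ninvolution (fun z => Function.update z i (!z i)) key
    (fun z _ => ?_) (fun z => mem_univ _) (fun z => ?_)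
  · intro h
    have := congrFun h i
    simp at this
  · funext k
    by_cases hk : k = i
    · subst hk; simp
    · simp [Function.update_of_ne hk]
end
end

section
/- Let X be a full-support multivariate Bernoulli vector in {0,1}^d and G : {0,1}^d → ℝ any function. Then there exists a unique vector β = (β_A)_{A⊆D} ∈ ℝ^(2^d) such that G(X) = ∑_{A⊆D} β_A e_A(X_A) almost surely, and β satisfies Γβ = μ where Γ_{A,B} := E[e_A(X_A) e_B(X_B)] and μ_A := E[e_A(X_A) G(X)]. -/
open Finset

noncomputable section

/-! Pairing with the Walsh function `walsh A` kills every `e_B` with `A ⊄ B` and is positive on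
`e_A`, so the pairing matrix is triangular for inclusion and the `2^d` functions `e_A` are linearly
independent, hence a basis of the functions on `{0,1}^d`. This gives existence and uniqueness of `β`;
the normal equations `Γ β = μ` follow by multiplying the expansion of `G` by `e_A` and taking
expectations. -/

namespace MultivariateBernoulli

variable {d : ℕ}

def walsh (A : Finset (Fin d)) (x : Fin d → Bool) : ℝ :=
  (-1 : ℝ) ^ (∑ j ∈ A, if x j then (1 : ℕ) else 0)

lemma eFun_eq_walsh_div (p : (Fin d → Bool) → ℝ) (A : Finset (Fin d)) (x : Fin d → Bool) :
    eFun p A x = walsh A x / margProb p A x := rfl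

lemma walsh_mul_self (A : Finset (Fin d)) (x : Fin d → Bool) : walsh A x * walsh A x = 1 := by
  rw [walsh, ← pow_add]
  exact Even.neg_one_pow ⟨_, rfl⟩

lemma walsh_update_of_notMem {A : Finset (Fin d)} {j : Fin d} (hj : j ∉ A)
    (x : Fin d → Bool) (b : Bool) : walsh A (Function.update x j b) = walsh A x := by
  unfold walsh
  congr 1
  exact sum_congr rfl fun i hi => by rw [Function.update_of_ne (ne_of_mem_of_not_mem hi hj)]

lemma walsh_update_not_of_mem {A : Finset (Fin d)} {j : Fin d} (hj : j ∈ A)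
    (x : Fin d → Bool) : walsh A (Function.update x j (!x j)) = -walsh A x := by
  have hrest : ∀ i ∈ A.erase j,
      (if Function.update x j (!x j) i then (1 : ℕ) else 0) = if x i then 1 else 0 :=
    fun i hi => by rw [Function.update_of_ne (ne_of_mem_erase hi)]
  rw [walsh, walsh, ← add_sum_erase _ _ hj, ← add_sum_erase _ (fun i => if x i then (1 : ℕ) else 0) hj,
    sum_congr rfl hrest, Function.update_self]
  cases x j <;> simp [pow_add]

lemma margProb_pos {p : (Fin d → Bool) → ℝ} (hpos : ∀ x, 0 < p x)
    (A : Finset (Fin d)) (x : Fin d → Bool) : 0 < margProb p A x :=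
  sum_pos (fun y _ => hpos y) ⟨x, by simp⟩

lemma margProb_congr (p : (Fin d → Bool) → ℝ) (A : Finset (Fin d)) {x x' : Fin d → Bool}
    (h : ∀ i ∈ A, x' i = x i) : margProb p A x' = margProb p A x := by
  refine congrArg (fun s => ∑ y ∈ s, p y) (filter_congr fun y _ => ?_)
  exact forall₂_congr fun i hi => by rw [h i hi]

lemma eFun_update_of_notMem (p : (Fin d → Bool) → ℝ) {A : Finset (Fin d)} {j : Fin d}
    (hj : j ∉ A) (x : Fin d → Bool) (b : Bool) :
    eFun p A (Function.update x j b) = eFun p A x := by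
  rw [eFun_eq_walsh_div, eFun_eq_walsh_div, walsh_update_of_notMem hj,
    margProb_congr p A fun i hi => Function.update_of_ne (ne_of_mem_of_not_mem hi hj) _ _]

/-- Flipping a coordinate `j ∈ A \ B` changes the sign of `walsh A` but not `eFun p B`. -/
lemma sum_walsh_mul_eFun_of_not_subset (p : (Fin d → Bool) → ℝ) {A B : Finset (Fin d)}
    (hAB : ¬ A ⊆ B) : ∑ x, walsh A x * eFun p B x = 0 := by
  obtain ⟨j, hjA, hjB⟩ := not_subset.mp hAB
  refine sum_involution (fun x _ => Function.update x j (!x j)) (fun x _ => ?_)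
    (fun x _ _ h => ?_) (fun _ _ => mem_univ _) (fun x _ => ?_)
  · rw [walsh_update_not_of_mem hjA, eFun_update_of_notMem p hjB]
    ring
  · simpa using congrFun h j
  · simp

lemma sum_walsh_mul_eFun_self_pos {p : (Fin d → Bool) → ℝ} (hpos : ∀ x, 0 < p x)
    (A : Finset (Fin d)) : 0 < ∑ x, walsh A x * eFun p A x := by
  refine sum_pos (fun x _ => ?_) univ_nonempty
  rw [eFun_eq_walsh_div, mul_div_assoc', walsh_mul_self]
  exact one_div_pos.mpr (margProb_pos hpos A x)

theorem linearIndependent_eFun {p : (Fin d → Bool) → ℝ} (hpos : ∀ x, 0 < p x) :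
    LinearIndependent ℝ (eFun p) := by
  rw [Fintype.linearIndependent_iff]
  intro β hβ
  by_contra! ⟨A₀, hA₀⟩
  obtain ⟨A, hAmax⟩ := exists_maximal (s := univ.filter (β · ≠ 0)) ⟨A₀, by simpa using hA₀⟩
  have hpair : ∑ B, β B * ∑ x, walsh A x * eFun p B x = 0 := by
    have hβx (x : Fin d → Bool) : ∑ B, β B * eFun p B x = 0 := by
      simpa using congrFun hβ x
    simp_rw [mul_sum, mul_left_comm (β _)]
    rw [sum_comm]
    simp_rw [← mul_sum, hβx, mul_zero, sum_const_zero]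
  rw [sum_eq_single A] at hpair
  · exact (mem_filter.mp hAmax.1).2 <| (mul_eq_zero.mp hpair).resolve_right
      (sum_walsh_mul_eFun_self_pos hpos A).ne'
  · intro B _ hBA
    by_cases hB : β B = 0
    · rw [hB, zero_mul]
    · refine mul_eq_zero_of_right _ (sum_walsh_mul_eFun_of_not_subset p fun hAB => hBA ?_)
      exact le_antisymm (hAmax.2 (by simpa using hB) hAB) hAB
  · exact fun h => absurd (mem_univ A) h

def eBasis {p : (Fin d → Bool) → ℝ} (hpos : ∀ x, 0 < p x) :
    Module.Basis (Finset (Fin d)) ℝ ((Fin d → Bool) → ℝ) :=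
  basisOfLinearIndependentOfCardEqFinrank (linearIndependent_eFun hpos) (by simp)

lemma existsUnique_eq_sum_mul_eFun {p : (Fin d → Bool) → ℝ} (hpos : ∀ x, 0 < p x)
    (G : (Fin d → Bool) → ℝ) :
    ∃! β : Finset (Fin d) → ℝ, ∀ x, G x = ∑ A, β A * eFun p A x := by
  have hcoe : ⇑(eBasis hpos) = eFun p := coe_basisOfLinearIndependentOfCardEqFinrank _ _
  have hexpand (β : Finset (Fin d) → ℝ) :
      (∀ x, G x = ∑ A, β A * eFun p A x) ↔ ∑ A, β A • eBasis hpos A = G := by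
    simp [hcoe, funext_iff, eq_comm]
  refine ⟨(eBasis hpos).repr G, (hexpand _).mpr ((eBasis hpos).sum_repr G), fun β hβ => ?_⟩
  rw [← (hexpand β).mp hβ, (eBasis hpos).repr_sum_self]

lemma sum_expec_mul_mul_eq_expec_mul_sum (p f : (Fin d → Bool) → ℝ) {ι : Type*} [Fintype ι]
    (e : ι → (Fin d → Bool) → ℝ) (β : ι → ℝ) :
    ∑ B, expec p (fun x => f x * e B x) * β B = expec p (fun x => f x * ∑ B, β B * e B x) := by
  simp only [expec, sum_mul, mul_sum]
  rw [sum_comm]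
  exact sum_congr rfl fun _ _ => sum_congr rfl fun _ _ => by ring

end MultivariateBernoulli

open MultivariateBernoulli in
theorem multivariate_bernoulli_hoeffding_general {d : ℕ}
    (p : (Fin d → Bool) → ℝ) (hpos : ∀ x, 0 < p x)
    (G : (Fin d → Bool) → ℝ) :
    ∃! β : Finset (Fin d) → ℝ,
      (∀ x, G x = ∑ A : Finset (Fin d), β A * eFun p A x) ∧
      (∀ A : Finset (Fin d),
        ∑ B : Finset (Fin d), expec p (fun x => eFun p A x * eFun p B x) * β B
          = expec p (fun x => eFun p A x * G x)) := by
  obtain ⟨β, hβG, hβunique⟩ := existsUnique_eq_sum_mul_eFun hpos G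
  refine ⟨β, ⟨hβG, fun A => ?_⟩, fun γ hγ => hβunique γ hγ.1⟩
  rw [sum_expec_mul_mul_eq_expec_mul_sum]
  simp_rw [← hβG]

/-- Multivariate Bernoulli Hoeffding decomposition: for any `G : {0,1}^d → ℝ` there is
a unique vector `β` with `G(X) = ∑_A β_A e_A(X_A)`, and `β` satisfies `Γ β = μ`
where `Γ_{A,B} = E[e_A e_B]` and `μ_A = E[e_A G]`. -/
theorem multivariate_bernoulli_hoeffding {d : ℕ}
    (p : (Fin d → Bool) → ℝ) (hpos : ∀ x, 0 < p x) (hsum : ∑ x, p x = 1)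
    (G : (Fin d → Bool) → ℝ) :
    ∃! β : Finset (Fin d) → ℝ,
      (∀ x, G x = ∑ A : Finset (Fin d), β A * eFun p A x) ∧
      (∀ A : Finset (Fin d),
        ∑ B : Finset (Fin d), expec p (fun x => eFun p A x * eFun p B x) * β B
          = expec p (fun x => eFun p A x * G x)) :=
  multivariate_bernoulli_hoeffding_general p hpos G
end
end

section
/- Let X be a random vector with finite support X ⊂ ℝ^d that factorizes as a Cartesian product X = X_1 × ⋯ × X_d of non-empty finite sets. Then the counting measure ν on X equals the product of the counting measures ν_i on the X_i, the law of X is absolutely continuous with respect to ν, and there exists M ∈ (0,1] such that the density f of X satisfies f ≥ M f_A f_{A^c} for every subset A of {1,...,d}, where f_A is the marginal density of X_A. -/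
/-! Both sides of the product identity give a box `∏ sᵢ` the mass `∏ |sᵢ ∩ 𝒳ᵢ|`. Being positive
on a finite set, `f` has a lower bound `M ∈ (0,1]` there; since marginal densities are at most
one, `M f_A f_{Aᶜ} ≤ M ≤ f` for every `A`. -/

namespace MeasureTheory.Measure

theorem absolutelyContinuous_count {α : Type*} [MeasurableSpace α] (μ : Measure α) :
    μ ≪ count := fun s hs => by
  rw [count_eq_zero_iff.mp hs, measure_empty]

theorem absolutelyContinuous_count_restrict_of_ae_mem {α : Type*} [MeasurableSpace α]
    {μ : Measure α} {s : Set α} (hs : ∀ᵐ x ∂μ, x ∈ s) : μ ≪ count.restrict s :=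
  restrict_eq_self_of_ae_mem hs ▸ (absolutelyContinuous_count μ).restrict s

theorem count_restrict_univ_pi_finset {ι : Type*} [Fintype ι] {α : ι → Type*}
    [∀ i, MeasurableSpace (α i)] [∀ i, MeasurableSingletonClass (α i)]
    (S : ∀ i, Finset (α i)) :
    count.restrict (Set.univ.pi fun i => (S i : Set (α i)))
      = Measure.pi fun i => count.restrict (S i : Set (α i)) := by
  classical
  have : ∀ i, IsFiniteMeasure (count.restrict (S i : Set (α i))) := fun i =>
    isFiniteMeasure_restrict.mpr (count_apply_finset (S i) ▸ ENNReal.natCast_ne_top _)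
  refine (pi_eq fun s hs => ?_).symm
  have hfin : ∀ i, s i ∩ S i = ((S i).filter (· ∈ s i) : Set (α i)) := fun i => by
    ext a; simp [and_comm]
  rw [restrict_apply (.univ_pi hs), ← Set.pi_inter_distrib, Set.pi_congr rfl fun i _ => hfin i,
    ← Fintype.coe_piFinset, count_apply_finset, Fintype.card_piFinset, Nat.cast_prod]
  exact Finset.prod_congr rfl fun i _ => by rw [restrict_apply (hs i), hfin i, count_apply_finset]

end MeasureTheory.Measure

theorem Finset.exists_mem_Ioc_le_of_pos {α : Type*} (s : Finset α) {f : α → ℝ}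
    (hf : ∀ x ∈ s, 0 < f x) : ∃ m ∈ Set.Ioc (0 : ℝ) 1, ∀ x ∈ s, m ≤ f x := by
  classical
  induction s using Finset.induction_on with
  | empty => exact ⟨1, ⟨one_pos, le_rfl⟩, by simp⟩
  | insert a s _ ih =>
    obtain ⟨m, ⟨hm0, hm1⟩, hm⟩ := ih fun x hx => hf x (mem_insert_of_mem hx)
    refine ⟨min (f a) m, ⟨lt_min (hf a (mem_insert_self a s)) hm0, min_le_of_right_le hm1⟩, ?_⟩
    simp only [mem_insert, forall_eq_or_imp]
    exact ⟨min_le_left _ _, fun x hx => (min_le_right _ _).trans (hm x hx)⟩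

open MeasureTheory

theorem finite_product_support_GHD_assumption_general
    {d : ℕ} (P : Measure (Fin d → ℝ)) [IsProbabilityMeasure P]
    (S : Fin d → Finset ℝ)
    (hsupp : ∀ x : Fin d → ℝ, 0 < P {x} ↔ ∀ i, x i ∈ S i)
    (hdiscrete : P {x : Fin d → ℝ | ∀ i, x i ∈ S i} = 1) :
    Measure.count.restrict {x : Fin d → ℝ | ∀ i, x i ∈ S i}
        = Measure.pi (fun i => Measure.count.restrict ((S i : Set ℝ))) ∧
    P ≪ Measure.count.restrict {x : Fin d → ℝ | ∀ i, x i ∈ S i} ∧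
    ∃ M ∈ Set.Ioc (0 : ℝ) 1, ∀ A : Finset (Fin d), ∀ x : Fin d → ℝ,
      (∀ i, x i ∈ S i) →
      M * (P {y | ∀ i ∈ A, y i = x i}).toReal * (P {y | ∀ i ∈ Aᶜ, y i = x i}).toReal
        ≤ (P {x}).toReal := by
  have hsupport_eq_pi : {x : Fin d → ℝ | ∀ i, x i ∈ S i} = Set.univ.pi fun i => (S i : Set ℝ) := by
    simp [Set.pi]
  refine ⟨hsupport_eq_pi ▸ Measure.count_restrict_univ_pi_finset S, ?_, ?_⟩
  · have hmeas : MeasurableSet {x : Fin d → ℝ | ∀ i, x i ∈ S i} :=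
      hsupport_eq_pi ▸ .univ_pi fun i => (S i).measurableSet
    exact Measure.absolutelyContinuous_count_restrict_of_ae_mem
      ((mem_ae_iff_prob_eq_one hmeas).mpr hdiscrete)
  · obtain ⟨M, hM, hMf⟩ := (Fintype.piFinset S).exists_mem_Ioc_le_of_pos
      (f := fun x => (P {x}).toReal) fun x hx =>
        ENNReal.toReal_pos ((hsupp x).mpr (Fintype.mem_piFinset.mp hx)).ne' (measure_ne_top P _)
    refine ⟨M, hM, fun A x hx => ?_⟩
    calc M * (P {y | ∀ i ∈ A, y i = x i}).toReal * (P {y | ∀ i ∈ Aᶜ, y i = x i}).toReal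
        ≤ M * (P {y | ∀ i ∈ A, y i = x i}).toReal :=
          mul_le_of_le_one_right (mul_nonneg hM.1.le ENNReal.toReal_nonneg) measureReal_le_one
      _ ≤ M := mul_le_of_le_one_right hM.1.le measureReal_le_one
      _ ≤ (P {x}).toReal := hMf x (Fintype.mem_piFinset.mpr hx)

/-- If the law `P` of a random vector `X` in `ℝ^d` has finite support which factorizes
as a Cartesian product `𝒳 = 𝒳_1 × ⋯ × 𝒳_d` of non-empty finite sets, then the counting
measure `ν` on `𝒳` is the product of the counting measures `ν_i` on the `𝒳_i`, the law
`P` is absolutely continuous with respect to `ν`, and there exists `M ∈ (0,1]` such that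
the density `f(x) = P{x}` satisfies `f ≥ M f_A f_{A^c}` on the support, for every subset
`A` of `{1,…,d}`, where `f_A(x_A) = P(X_A = x_A)` is the marginal density. -/
theorem finite_product_support_GHD_assumption
    {d : ℕ} (P : Measure (Fin d → ℝ)) [IsProbabilityMeasure P]
    (S : Fin d → Finset ℝ) (hS : ∀ i, (S i).Nonempty)
    (hsupp : ∀ x : Fin d → ℝ, 0 < P {x} ↔ ∀ i, x i ∈ S i)
    (hdiscrete : P {x : Fin d → ℝ | ∀ i, x i ∈ S i} = 1) :
    Measure.count.restrict {x : Fin d → ℝ | ∀ i, x i ∈ S i}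
        = Measure.pi (fun i => Measure.count.restrict ((S i : Set ℝ))) ∧
    P ≪ Measure.count.restrict {x : Fin d → ℝ | ∀ i, x i ∈ S i} ∧
    ∃ M ∈ Set.Ioc (0 : ℝ) 1, ∀ A : Finset (Fin d), ∀ x : Fin d → ℝ,
      (∀ i, x i ∈ S i) →
      M * (P {y | ∀ i ∈ A, y i = x i}).toReal * (P {y | ∀ i ∈ Aᶜ, y i = x i}).toReal
        ≤ (P {x}).toReal :=
  finite_product_support_GHD_assumption_general P S hsupp hdiscrete
end

section
/- In the Bernoulli-pair model with joint probabilities (ρ, 1/2−ρ, 1/2−ρ, ρ), define G(X) := (3/4) e_1(X_1) + (1/4) e_2(X_2) where e_i(x_i) = 2(−1)^{x_i}. Then E[G(X)] = 0, Var(G(X)) = 1 + 6ρ, and the first-order Sobol' indices are S_1 = (3/2)(1+2ρ)/(1+6ρ) and S_2 = (1/2)(6ρ−1)/(1+6ρ); in particular S_2 = 0 if and only if ρ = 1/6, and S_2 < 0 for ρ < 1/6. -/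
noncomputable section

/-- Mass function of the Bernoulli pair: `ρ` on the diagonal, `1/2 − ρ` off it. -/
def pPair (ρ : ℝ) (z : Bool × Bool) : ℝ := if z.1 = z.2 then ρ else 1 / 2 - ρ

/-- Expectation under `pPair ρ`. -/
def expecPair (ρ : ℝ) (f : Bool × Bool → ℝ) : ℝ := ∑ z : Bool × Bool, pPair ρ z * f z

/-- The basis vectors `e_i(x_i) = 2(−1)^{x_i}`. -/
def e1pair (z : Bool × Bool) : ℝ := 2 * (-1 : ℝ) ^ (if z.1 then (1 : ℕ) else 0)
def e2pair (z : Bool × Bool) : ℝ := 2 * (-1 : ℝ) ^ (if z.2 then (1 : ℕ) else 0)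

/-- The model `G(X) = (3/4) e₁(X₁) + (1/4) e₂(X₂)`. -/
def GpairLin (z : Bool × Bool) : ℝ := 3 / 4 * e1pair z + 1 / 4 * e2pair z

/-- For the Bernoulli pair with joint probabilities `(ρ, 1/2−ρ, 1/2−ρ, ρ)` and
`G = (3/4)e₁ + (1/4)e₂`: `E[G] = 0`, `Var(G) = 1 + 6ρ`,
`S₁ = (3/2)(1+2ρ)/(1+6ρ)`, `S₂ = (1/2)(6ρ−1)/(1+6ρ)`; moreover `S₂ = 0 ↔ ρ = 1/6`
and `S₂ < 0` for `ρ < 1/6`. -/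
theorem pair_linear_model_sobol (ρ : ℝ) (hρ : ρ ∈ Set.Ioo (0 : ℝ) (1 / 2)) :
    expecPair ρ GpairLin = 0 ∧
    expecPair ρ (fun z => GpairLin z * GpairLin z)
      - expecPair ρ GpairLin * expecPair ρ GpairLin = 1 + 6 * ρ ∧
    3 / 4 * expecPair ρ (fun z => GpairLin z * e1pair z) / (1 + 6 * ρ)
      = 3 / 2 * (1 + 2 * ρ) / (1 + 6 * ρ) ∧
    1 / 4 * expecPair ρ (fun z => GpairLin z * e2pair z) / (1 + 6 * ρ)
      = 1 / 2 * (6 * ρ - 1) / (1 + 6 * ρ) ∧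
    (1 / 4 * expecPair ρ (fun z => GpairLin z * e2pair z) / (1 + 6 * ρ) = 0 ↔ ρ = 1 / 6) ∧
    (ρ < 1 / 6 → 1 / 4 * expecPair ρ (fun z => GpairLin z * e2pair z) / (1 + 6 * ρ) < 0) := by
  obtain ⟨h0, h2⟩ := hρ
  have hpos : (0 : ℝ) < 1 + 6 * ρ := by linarith
  have hne : (1 + 6 * ρ) ≠ 0 := ne_of_gt hpos
  have hE : expecPair ρ GpairLin = 0 := by
    simp [expecPair, pPair, e1pair, e2pair, GpairLin, Fintype.sum_prod_type]
    ring
  have hE1 : expecPair ρ (fun z => GpairLin z * e1pair z) = 2 * (1 + 2 * ρ) := by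
    simp [expecPair, pPair, e1pair, e2pair, GpairLin, Fintype.sum_prod_type]
    ring
  have hE2 : expecPair ρ (fun z => GpairLin z * e2pair z) = 2 * (6 * ρ - 1) := by
    simp [expecPair, pPair, e1pair, e2pair, GpairLin, Fintype.sum_prod_type]
    ring
  have hVar : expecPair ρ (fun z => GpairLin z * GpairLin z) = 1 + 6 * ρ := by
    simp [expecPair, pPair, e1pair, e2pair, GpairLin, Fintype.sum_prod_type]
    ring
  refine ⟨hE, by rw [hVar, hE]; ring, by rw [hE1]; ring_nf, by rw [hE2]; ring_nf, ?_, ?_⟩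
  · rw [hE2]
    rw [div_eq_zero_iff]
    constructor
    · rintro (h | h)
      · linarith
      · exact absurd h hne
    · intro h; left; rw [h]; ring
  · intro h
    rw [hE2]
    apply div_neg_of_neg_of_pos _ hpos
    linarith
end
end
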